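/- Let C ∈ ℝ^{n×m}, a ∈ ℝ^n, b ∈ ℝ^m, λ > 0, and let A ⊆ {1,…,n}×{1,…,m}. Suppose x : A → ℝ has nonnegative values and satisfies (Q_A x)_{(i,j)} = a_i + b_j − C_{i,j}/λ for all (i, j) ∈ A, where (Q_A x)_{(i,j)} = ∑_{l : (i,l) ∈ A} x_{(i,l)} + ∑_{k : (k,j) ∈ A} x_{(k,j)}. Define T ∈ ℝ^{n×m} by T_{i,j} = x_{(i,j)} for (i, j) ∈ A and T_{i,j} = 0 otherwise. If for every (i, j) ∉ A one has C_{i,j} + λ·([T𝟙_m]_i − a_i) + λ·([Tᵀ𝟙_n]_j − b_j) ≥ 0, then T minimizes the ℓ2-penalized unbalanced optimal transport objective F_λ over all nonnegative matrices. -/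

import Mathlib

open Finset

/-- The ℓ2-penalized unbalanced optimal transport objective. -/
noncomputable def FobjL2 {n m : ℕ} (C : Matrix (Fin n) (Fin m) ℝ)
    (a : Fin n → ℝ) (b : Fin m → ℝ) (lam : ℝ)
    (T : Matrix (Fin n) (Fin m) ℝ) : ℝ :=
  (∑ i, ∑ j, C i j * T i j)
    + lam / 2 * ∑ i, ((∑ j, T i j) - a i) ^ 2
    + lam / 2 * ∑ j, ((∑ i, T i j) - b j) ^ 2

/-- Optimality certificate for a candidate active set `A`: if the nonnegative
vector `x` supported on `A` solves the linear system
`(Q_A x)_{(i,j)} = a_i + b_j − C_{i,j}/λ` on `A` and the KKT dual feasibility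
holds outside `A`, then the extension `T` of `x` by zero minimizes the
ℓ2-penalized UOT objective over nonnegative matrices. -/
theorem l2_uot_certificate {n m : ℕ} (C : Matrix (Fin n) (Fin m) ℝ)
    (a : Fin n → ℝ) (b : Fin m → ℝ) (lam : ℝ) (hlam : 0 < lam)
    (A : Finset (Fin n × Fin m)) (T : Matrix (Fin n) (Fin m) ℝ)
    (hTnonneg : ∀ i j, 0 ≤ T i j)
    (hTzero : ∀ i j, (i, j) ∉ A → T i j = 0)
    (hsystem : ∀ i j, (i, j) ∈ A →
        (∑ l ∈ Finset.univ.filter (fun l => (i, l) ∈ A), T i l)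
          + (∑ k ∈ Finset.univ.filter (fun k => (k, j) ∈ A), T k j)
        = a i + b j - C i j / lam)
    (hdual : ∀ i j, (i, j) ∉ A →
        0 ≤ C i j + lam * ((∑ l, T i l) - a i) + lam * ((∑ k, T k j) - b j)) :
    ∀ T' : Matrix (Fin n) (Fin m) ℝ, (∀ i j, 0 ≤ T' i j) →
      FobjL2 C a b lam T ≤ FobjL2 C a b lam T' := by
  intro T' hT'
  set g : Fin n → Fin m → ℝ := fun i j =>
    C i j + lam * ((∑ l, T i l) - a i) + lam * ((∑ k, T k j) - b j) with hg
  -- full row/column sums equal the filtered ones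
  have hrow : ∀ i : Fin n, (∑ l ∈ Finset.univ.filter (fun l => (i, l) ∈ A), T i l)
      = ∑ l, T i l := by
    intro i
    refine Finset.sum_subset (Finset.filter_subset _ _) ?_
    intro l _ hl
    simp only [Finset.mem_filter, Finset.mem_univ, true_and] at hl
    exact hTzero i l hl
  have hcol : ∀ j : Fin m, (∑ k ∈ Finset.univ.filter (fun k => (k, j) ∈ A), T k j)
      = ∑ k, T k j := by
    intro j
    refine Finset.sum_subset (Finset.filter_subset _ _) ?_
    intro k _ hk
    simp only [Finset.mem_filter, Finset.mem_univ, true_and] at hk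
    exact hTzero k j hk
  -- g vanishes on A
  have hgA : ∀ i j, (i, j) ∈ A → g i j = 0 := by
    intro i j hij
    have h := hsystem i j hij
    rw [hrow i, hcol j] at h
    have hlam' : lam ≠ 0 := ne_of_gt hlam
    simp only [hg]
    field_simp at h
    nlinarith [h]
  have hterm : ∀ i j, 0 ≤ g i j * (T' i j - T i j) := by
    intro i j
    by_cases hij : (i, j) ∈ A
    · rw [hgA i j hij]; ring_nf; exact le_refl 0
    · have h1 := hdual i j hij
      have h2 := hTzero i j hij
      rw [h2, sub_zero]
      exact mul_nonneg h1 (hT' i j)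
  -- key identity
  have main : FobjL2 C a b lam T' - FobjL2 C a b lam T
      = (∑ i, ∑ j, g i j * (T' i j - T i j))
        + lam / 2 * ∑ i, ((∑ j, T' i j) - ∑ j, T i j) ^ 2
        + lam / 2 * ∑ j, ((∑ i, T' i j) - ∑ i, T i j) ^ 2 := by
    have h1 : ∑ i, ∑ j, g i j * (T' i j - T i j)
        = ((∑ i, ∑ j, C i j * T' i j) - (∑ i, ∑ j, C i j * T i j))
          + lam * ∑ i, ((∑ j, T i j) - a i) * ((∑ j, T' i j) - ∑ j, T i j)
          + lam * ∑ j, ((∑ i, T i j) - b j) * ((∑ i, T' i j) - ∑ i, T i j) := by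
      simp only [hg, add_mul, Finset.sum_add_distrib]
      congr 1
      · congr 1
        · rw [← Finset.sum_sub_distrib]
          refine Finset.sum_congr rfl fun i _ => ?_
          rw [← Finset.sum_sub_distrib]
          refine Finset.sum_congr rfl fun j _ => ?_
          ring
        · rw [Finset.mul_sum]
          refine Finset.sum_congr rfl fun i _ => ?_
          rw [← Finset.mul_sum, ← Finset.sum_sub_distrib]
          ring
      · rw [Finset.sum_comm, Finset.mul_sum]
        refine Finset.sum_congr rfl fun j _ => ?_
        rw [← Finset.mul_sum, ← Finset.sum_sub_distrib]
        ring
    have h2 : ∑ i, ((∑ j, T' i j) - a i) ^ 2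
        = (∑ i, ((∑ j, T i j) - a i) ^ 2)
          + 2 * (∑ i, ((∑ j, T i j) - a i) * ((∑ j, T' i j) - ∑ j, T i j))
          + ∑ i, ((∑ j, T' i j) - ∑ j, T i j) ^ 2 := by
      rw [Finset.mul_sum, ← Finset.sum_add_distrib, ← Finset.sum_add_distrib]
      refine Finset.sum_congr rfl fun i _ => by ring
    have h3 : ∑ j, ((∑ i, T' i j) - b j) ^ 2
        = (∑ j, ((∑ i, T i j) - b j) ^ 2)
          + 2 * (∑ j, ((∑ i, T i j) - b j) * ((∑ i, T' i j) - ∑ i, T i j))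
          + ∑ j, ((∑ i, T' i j) - ∑ i, T i j) ^ 2 := by
      rw [Finset.mul_sum, ← Finset.sum_add_distrib, ← Finset.sum_add_distrib]
      refine Finset.sum_congr rfl fun j _ => by ring
    rw [h1]
    unfold FobjL2
    rw [h2, h3]
    ring
  have hS1 : 0 ≤ ∑ i, ∑ j, g i j * (T' i j - T i j) :=
    Finset.sum_nonneg fun i _ => Finset.sum_nonneg fun j _ => hterm i j
  have hS2 : 0 ≤ ∑ i : Fin n, ((∑ j, T' i j) - ∑ j, T i j) ^ 2 :=
    Finset.sum_nonneg fun i _ => sq_nonneg _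
  have hS3 : 0 ≤ ∑ j : Fin m, ((∑ i, T' i j) - ∑ i, T i j) ^ 2 :=
    Finset.sum_nonneg fun j _ => sq_nonneg _
  nlinarith [main, hS1, hS2, hS3, hlam]
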